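/- Let R be a commutative ring, let U →(α,β)ᵗ U ⊕ V →(γ,δ) W → 0 be an exact sequence of finitely generated R-modules, and let Y be an R-module of finite length. Then length_R(Hom_R(V,Y)) ≤ length_R(Hom_R(W,Y)), with equality if and only if the induced map (α*, β*) : Hom_R(U,Y) ⊕ Hom_R(V,Y) → Hom_R(U,Y) is surjective. -/

import Mathlib

universe u

set_option linter.unusedSectionVars false
set_option maxHeartbeats 1000000

open Order

section Modular
variable {α : Type*} [Lattice α] [IsModularLattice α]

lemma myheight_add_one_le {a b : α} (hab : a < b) :
    Order.height a + 1 ≤ Order.height b := by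
  rw [Order.height_eq_iSup_lt_height b]
  exact le_iSup₂ (f := fun y (_ : y < b) => Order.height y + 1) a hab

lemma mychain_aux (N : α) (n : ℕ) : ∀ p : LTSeries α, p.length = n →
    (n : ℕ∞) ≤ Order.height (⟨p.last ⊓ N, inf_le_right⟩ : Set.Iic N)
      + Order.height (⟨p.last ⊔ N, le_sup_right⟩ : Set.Ici N) := by
  induction n with
  | zero => intro p hp; simp
  | succ n ih =>
    intro p hp
    have hne : p.length ≠ 0 := by omega
    have hlt : p.eraseLast.last < p.last := p.eraseLast_last_rel_last hne
    have hlen : p.eraseLast.length = n := by simp [hp]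
    have IH := ih p.eraseLast hlen
    have hmono : p.eraseLast.last ⊓ N ≤ p.last ⊓ N := inf_le_inf_right N hlt.le
    by_cases hinf : p.eraseLast.last ⊓ N < p.last ⊓ N
    · have h1 : Order.height (⟨p.eraseLast.last ⊓ N, inf_le_right⟩ : Set.Iic N) + 1
          ≤ Order.height (⟨p.last ⊓ N, inf_le_right⟩ : Set.Iic N) :=
        myheight_add_one_le (by exact Subtype.mk_lt_mk.mpr hinf)
      have h2 : Order.height (⟨p.eraseLast.last ⊔ N, le_sup_right⟩ : Set.Ici N)
          ≤ Order.height (⟨p.last ⊔ N, le_sup_right⟩ : Set.Ici N) :=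
        Order.height_mono (Subtype.mk_le_mk.mpr (sup_le_sup_right hlt.le N))
      calc ((n + 1 : ℕ) : ℕ∞) = (n : ℕ∞) + 1 := by push_cast; ring
        _ ≤ _ + 1 := by exact add_le_add_left IH 1
        _ ≤ _ := by
            rw [add_assoc, add_comm (Order.height (⟨p.eraseLast.last ⊔ N, le_sup_right⟩ : Set.Ici N)) 1,
              ← add_assoc]
            exact add_le_add h1 h2
    · have hinf' : p.last ⊓ N ≤ p.eraseLast.last ⊓ N :=
        (hmono.lt_or_eq.resolve_left hinf).ge
      have hsup : p.eraseLast.last ⊔ N < p.last ⊔ N :=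
        sup_lt_sup_of_lt_of_inf_le_inf hlt hinf'
      have h1 : Order.height (⟨p.eraseLast.last ⊓ N, inf_le_right⟩ : Set.Iic N)
          ≤ Order.height (⟨p.last ⊓ N, inf_le_right⟩ : Set.Iic N) :=
        Order.height_mono (Subtype.mk_le_mk.mpr (inf_le_inf_right N hlt.le))
      have h2 : Order.height (⟨p.eraseLast.last ⊔ N, le_sup_right⟩ : Set.Ici N) + 1
          ≤ Order.height (⟨p.last ⊔ N, le_sup_right⟩ : Set.Ici N) :=
        myheight_add_one_le (by exact Subtype.mk_lt_mk.mpr hsup)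
      calc ((n + 1 : ℕ) : ℕ∞) = (n : ℕ∞) + 1 := by push_cast; ring
        _ ≤ _ + 1 := by exact add_le_add_left IH 1
        _ ≤ _ := by rw [add_assoc]; exact add_le_add h1 h2

lemma myheight_le_inf_sup (N x : α) :
    Order.height x ≤ Order.height (⟨x ⊓ N, inf_le_right⟩ : Set.Iic N)
      + Order.height (⟨x ⊔ N, le_sup_right⟩ : Set.Ici N) := by
  apply Order.height_le
  intro p hlast
  subst hlast
  exact mychain_aux N p.length p rfl

end Modular

set_option linter.unusedSectionVars false

section Heights
variable {α : Type*} [Preorder α]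

lemma myheight_iic (N : α) (x : Set.Iic N) : Order.height x = Order.height (x : α) := by
  apply le_antisymm
  · exact Order.height_le_height_apply_of_strictMono (fun y : Set.Iic N => (y : α)) (fun _ _ h => h) x
  · apply Order.height_le
    intro p hlast
    have hmem : ∀ i, p i ∈ Set.Iic N := fun i =>
      le_trans (le_trans (p.monotone (Fin.le_last i)) (le_of_eq hlast)) x.2
    let q : LTSeries (Set.Iic N) := ⟨p.length, fun i => ⟨p i, hmem i⟩, fun i => p.step i⟩
    have hq : q.last = x := Subtype.ext hlast
    simpa [hq] using Order.length_le_height_last (p := q)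

lemma myheight_ici_le_coheight (N : α) (x : Set.Ici N) :
    Order.height x ≤ Order.coheight N := by
  apply Order.height_le
  intro p hlast
  have := Order.length_le_coheight (x := N)
    (p := p.map Subtype.val (fun _ _ h => h))
  exact this (by exact p.head.2)

end Heights

noncomputable def elen (R M : Type*) [Semiring R] [AddCommMonoid M] [Module R M] : ℕ∞ :=
  Order.height (⊤ : Submodule R M)

section ElenBasic
variable {R M M' : Type*} [Ring R] [AddCommGroup M] [Module R M]
  [AddCommGroup M'] [Module R M']

lemma elen_congr (e : M ≃ₗ[R] M') : elen R M = elen R M' := by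
  have h := Order.height_orderIso (Submodule.orderIsoMapComap e) ⊤
  rw [OrderIso.map_top] at h
  exact h.symm

lemma elen_le_of_injective (f : M →ₗ[R] M') (hf : Function.Injective f) :
    elen R M ≤ elen R M' :=
  le_trans
    (Order.height_le_height_apply_of_strictMono _ (Submodule.map_strictMono_of_injective hf) ⊤)
    (Order.height_mono le_top)

lemma elen_add (N : Submodule R M) : elen R M = elen R ↥N + elen R (M ⧸ N) := by
  have hIic : elen R ↥N = Order.height (⊤ : Set.Iic N) := by
    have h := Order.height_orderIso N.mapIic ⊤
    rw [OrderIso.map_top] at h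
    exact h.symm
  have hIci : elen R (M ⧸ N) = Order.height (⊤ : Set.Ici N) := by
    have e2 : {p' : Submodule R M // N ≤ p'} ≃o Set.Ici N :=
      { toFun := fun q => ⟨q.1, q.2⟩, invFun := fun q => ⟨q.1, q.2⟩,
        left_inv := fun q => rfl, right_inv := fun q => rfl,
        map_rel_iff' := Iff.rfl }
    have h := Order.height_orderIso ((Submodule.comapMkQRelIso N).trans e2) ⊤
    rw [OrderIso.map_top] at h
    exact h.symm
  rw [hIic, hIci]
  apply le_antisymm
  · have h := myheight_le_inf_sup N (⊤ : Submodule R M)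
    have e1 : (⟨⊤ ⊓ N, Set.mem_Iic.mpr inf_le_right⟩ : Set.Iic N) = ⊤ := Subtype.ext (by simp)
    have e2 : (⟨(⊤ : Submodule R M) ⊔ N, Set.mem_Ici.mpr le_sup_right⟩ : Set.Ici N) = ⊤ := Subtype.ext (by simp)
    rwa [e1, e2] at h
  · have hsup : Order.height (⊤ : Submodule R M)
        = ⨆ a : Submodule R M, Order.height a + Order.coheight a := by
      have h := Order.height_top_eq_krullDim (α := Submodule R M)
      rw [Order.krullDim_eq_iSup_height_add_coheight_of_nonempty] at h
      exact WithBot.coe_inj.mp h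
    calc Order.height (⊤ : Set.Iic N) + Order.height (⊤ : Set.Ici N)
        ≤ Order.height (((⊤ : Set.Iic N) : Submodule R M)) + Order.coheight N :=
          add_le_add (le_of_eq (myheight_iic N ⊤)) (myheight_ici_le_coheight N ⊤)
      _ ≤ Order.height N + Order.coheight N := by
          apply add_le_add_right
          apply Order.height_mono
          exact (⊤ : Set.Iic N).2
      _ ≤ ⨆ a : Submodule R M, Order.height a + Order.coheight a :=
          le_iSup (fun a : Submodule R M => Order.height a + Order.coheight a) N
      _ = Order.height (⊤ : Submodule R M) := hsup.symm

end ElenBasic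

section ElenMore
variable {R : Type*} [Ring R]

lemma elen_simple {M : Type*} [AddCommGroup M] [Module R M] (h : IsSimpleModule R M) :
    elen R M ≤ 1 := by
  apply Order.height_le
  intro p _
  suffices h2 : p.length ≤ 1 by exact_mod_cast h2
  by_contra hlen
  push_neg at hlen
  have h01 : p ⟨0, by omega⟩ < p ⟨1, by omega⟩ := p.strictMono (by simp [Fin.lt_def])
  have h12 : p ⟨1, by omega⟩ < p ⟨2, by omega⟩ := p.strictMono (by simp [Fin.lt_def])
  rcases eq_bot_or_eq_top (p ⟨1, by omega⟩) with h1 | h1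
  · rw [h1] at h01; exact not_lt_bot h01
  · rw [h1] at h12; exact not_top_lt h12

lemma eq_top_of_elen_quotient_eq_zero {M : Type*} [AddCommGroup M] [Module R M]
    (N : Submodule R M) (h : elen R (M ⧸ N) = 0) : N = ⊤ := by
  rw [(Submodule.Quotient.subsingleton_iff (p := N)).symm]
  have hmin : IsMin (⊤ : Submodule R (M ⧸ N)) := Order.height_eq_zero.mp h
  have hbot : (⊤ : Submodule R (M ⧸ N)) = ⊥ := le_antisymm (hmin bot_le) bot_le
  constructor
  intro a b
  have ha : a ∈ (⊤ : Submodule R (M ⧸ N)) := trivial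
  have hb : b ∈ (⊤ : Submodule R (M ⧸ N)) := trivial
  rw [hbot] at ha hb
  simp only [Submodule.mem_bot] at ha hb
  rw [ha, hb]

lemma elen_subsingleton {M : Type*} [AddCommGroup M] [Module R M] [Subsingleton M] :
    elen R M = 0 := by
  apply Order.height_eq_zero.mpr
  intro b _
  intro x _
  rw [Subsingleton.elim x 0]
  exact b.zero_mem

lemma elen_ne_top_of_isFiniteLength {M : Type*} [AddCommGroup M] [Module R M]
    (h : IsFiniteLength R M) : elen R M ≠ ⊤ := by
  induction' h with M _ _ _ M _ _ S _ hfl ih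
  · rw [elen_subsingleton]; simp
  · rw [elen_add S]
    apply WithTop.add_ne_top.mpr
    refine ⟨ih, ?_⟩
    exact ((elen_simple ‹_›).trans_lt (lt_top_iff_ne_top.mpr (by simp))).ne

lemma elen_prod {M M' : Type*} [AddCommGroup M] [Module R M] [AddCommGroup M'] [Module R M'] :
    elen R (M × M') = elen R M + elen R M' := by
  rw [elen_add (LinearMap.ker (LinearMap.snd R M M'))]
  congr 1
  · refine (elen_congr ?_).symm
    exact (LinearEquiv.ofInjective _ (LinearMap.inl_injective (M₂ := M'))).trans
      (LinearEquiv.ofEq _ _ (LinearMap.range_inl R M M'))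
  · exact elen_congr ((LinearMap.snd R M M').quotKerEquivOfSurjective
      (Prod.snd_surjective))

lemma elen_eq_top_submodule {M : Type*} [AddCommGroup M] [Module R M]
    (p : Submodule R M) (hfin : elen R ↥p ≠ ⊤) (h : elen R ↥p = elen R M) : p = ⊤ := by
  apply eq_top_of_elen_quotient_eq_zero
  have := elen_add p
  rw [← h] at this
  have h0 : elen R ↥p + elen R (M ⧸ p) = elen R ↥p + 0 := by
    rw [add_zero]; exact this.symm
  exact WithTop.add_left_cancel hfin h0

end ElenMore

section HomLen
variable {R : Type*} [CommRing R]

lemma isFiniteLength_hom {M Y : Type*} [AddCommGroup M] [Module R M] [Module.Finite R M]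
    [AddCommGroup Y] [Module R Y] (hY : IsFiniteLength R Y) :
    IsFiniteLength R (M →ₗ[R] Y) := by
  obtain ⟨hN, hA⟩ := isFiniteLength_iff_isNoetherian_isArtinian.mp hY
  obtain ⟨n, f, hf⟩ := Module.Finite.exists_fin' R M
  let g : (M →ₗ[R] Y) →ₗ[R] ((Fin n → R) →ₗ[R] Y) := LinearMap.lcomp R Y f
  have hg : Function.Injective g := by
    intro a b hab
    ext m
    obtain ⟨x, rfl⟩ := hf m
    exact LinearMap.congr_fun hab x
  let e : ((Fin n → R) →ₗ[R] Y) ≃ₗ[R] (Fin n → Y) := LinearEquiv.piRing R Y (Fin n) R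
  let g' : (M →ₗ[R] Y) →ₗ[R] (Fin n → Y) := e.toLinearMap.comp g
  have hg' : Function.Injective g' := e.injective.comp hg
  have : IsNoetherian R (M →ₗ[R] Y) := isNoetherian_of_injective g' hg'
  have : IsArtinian R (M →ₗ[R] Y) := isArtinian_of_injective g' hg'
  exact isFiniteLength_iff_isNoetherian_isArtinian.mpr ⟨‹_›, ‹_›⟩

end HomLen


/-- The composition length of an `R`-module `M`, defined as the Krull dimension of its
lattice of submodules (for modules of finite length this is the common length of any
composition series, by the Jordan–Hölder theorem). -/
noncomputable def moduleLength (R M : Type*) [Semiring R] [AddCommMonoid M] [Module R M] :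
    WithBot ℕ∞ :=
  Order.krullDim (Submodule R M)

/-- Let `R` be a commutative ring, let
`U →(α,β)ᵗ U ⊕ V →(γ,δ) W → 0` be an exact sequence of finitely generated `R`-modules, and
let `Y` be an `R`-module of finite length. Then
`length_R Hom_R(V,Y) ≤ length_R Hom_R(W,Y)`, with equality if and only if the induced map
`(α^*, β^*) : Hom_R(U,Y) ⊕ Hom_R(V,Y) → Hom_R(U,Y)` is surjective. -/
theorem stmt_16 {R : Type u} [CommRing R]
    {U V W : Type u} [AddCommGroup U] [Module R U] [AddCommGroup V] [Module R V]
    [AddCommGroup W] [Module R W]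
    [Module.Finite R U] [Module.Finite R V] [Module.Finite R W]
    (α : U →ₗ[R] U) (β : U →ₗ[R] V) (γ : U →ₗ[R] W) (δ : V →ₗ[R] W)
    (hexact : Function.Exact (LinearMap.prod α β) (LinearMap.coprod γ δ))
    (hsurj : Function.Surjective (LinearMap.coprod γ δ))
    (Y : Type u) [AddCommGroup Y] [Module R Y] (hY : IsFiniteLength R Y) :
    moduleLength R (V →ₗ[R] Y) ≤ moduleLength R (W →ₗ[R] Y) ∧
      (moduleLength R (V →ₗ[R] Y) = moduleLength R (W →ₗ[R] Y) ↔
        Function.Surjective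
          (fun pq : (U →ₗ[R] Y) × (V →ₗ[R] Y) => pq.1.comp α + pq.2.comp β)) := by
  classical
  let φ : ((U →ₗ[R] Y) × (V →ₗ[R] Y)) →ₗ[R] (U →ₗ[R] Y) :=
    ((LinearMap.lcomp R Y α).comp (LinearMap.fst R (U →ₗ[R] Y) (V →ₗ[R] Y))) +
      ((LinearMap.lcomp R Y β).comp (LinearMap.snd R (U →ₗ[R] Y) (V →ₗ[R] Y)))
  have hφ : ∀ pq : (U →ₗ[R] Y) × (V →ₗ[R] Y), φ pq = pq.1.comp α + pq.2.comp β :=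
    fun _ => rfl
  let ι : (W →ₗ[R] Y) →ₗ[R] ((U →ₗ[R] Y) × (V →ₗ[R] Y)) :=
    LinearMap.prod (LinearMap.lcomp R Y γ) (LinearMap.lcomp R Y δ)
  have hι : ∀ f : W →ₗ[R] Y, ι f = (f.comp γ, f.comp δ) := fun _ => rfl
  have hι_inj : Function.Injective ι := by
    intro f g hfg
    rw [hι, hι] at hfg
    have h1 : f.comp γ = g.comp γ := congrArg Prod.fst hfg
    have h2 : f.comp δ = g.comp δ := congrArg Prod.snd hfg
    ext w
    obtain ⟨⟨u, v⟩, rfl⟩ := hsurj w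
    have e1 := LinearMap.congr_fun h1 u
    have e2 := LinearMap.congr_fun h2 v
    simp only [LinearMap.comp_apply] at e1 e2
    simp only [LinearMap.coprod_apply, map_add, e1, e2]
  have hrange : LinearMap.range ι = LinearMap.ker φ := by
    apply le_antisymm
    · rintro _ ⟨f, rfl⟩
      simp only [LinearMap.mem_ker]
      ext u
      have h0 : (LinearMap.coprod γ δ) ((LinearMap.prod α β) u) = 0 :=
        hexact.apply_apply_eq_zero u
      have h1 : γ (α u) + δ (β u) = 0 := by simpa using h0
      rw [hφ, hι]
      simp only [LinearMap.add_apply, LinearMap.comp_apply, LinearMap.zero_apply]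
      calc f (γ (α u)) + f (δ (β u)) = f (γ (α u) + δ (β u)) := (map_add f _ _).symm
        _ = 0 := by rw [h1, map_zero]
    · rintro ⟨p, q⟩ hpq
      rw [LinearMap.mem_ker, hφ] at hpq
      set K := LinearMap.ker (LinearMap.coprod γ δ) with hK
      have hle : K ≤ LinearMap.ker (LinearMap.coprod p q) := by
        rintro ⟨u, v⟩ huv
        rw [hK, LinearMap.mem_ker] at huv
        rw [LinearMap.mem_ker]
        obtain ⟨t, ht⟩ := (hexact (u, v)).mp huv
        have htu : α t = u := congrArg Prod.fst ht
        have htv : β t = v := congrArg Prod.snd ht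
        have h2 := LinearMap.congr_fun hpq t
        simp only [LinearMap.add_apply, LinearMap.comp_apply, LinearMap.zero_apply] at h2
        simp only [LinearMap.coprod_apply, ← htu, ← htv]
        exact h2
      let e := (LinearMap.coprod γ δ).quotKerEquivOfSurjective hsurj
      let f : W →ₗ[R] Y := (K.liftQ (LinearMap.coprod p q) hle).comp
        (e.symm : W →ₗ[R] ((U × V) ⧸ K))
      have hmk : ∀ z : U × V, e.symm ((LinearMap.coprod γ δ) z) = Submodule.Quotient.mk z := by
        intro z
        rw [LinearEquiv.symm_apply_eq]
        simp [e, LinearMap.quotKerEquivOfSurjective, LinearMap.quotKerEquivRange_apply_mk]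
      have hf : ∀ z : U × V, f ((LinearMap.coprod γ δ) z) = p z.1 + q z.2 := by
        intro z
        simp only [f, LinearMap.comp_apply, LinearEquiv.coe_coe, hmk z]
        rw [Submodule.liftQ_apply]
        simp [LinearMap.coprod_apply]
      refine ⟨f, ?_⟩
      rw [hι]
      refine Prod.ext ?_ ?_
      · ext u
        have := hf (u, 0)
        simpa using this
      · ext v
        have := hf (0, v)
        simpa using this
  -- length bookkeeping
  have hA := isFiniteLength_hom (M := U) (Y := Y) hY
  have hB := isFiniteLength_hom (M := V) (Y := Y) hY
  have haU : elen R (U →ₗ[R] Y) ≠ ⊤ := elen_ne_top_of_isFiniteLength hA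
  have haB : elen R (V →ₗ[R] Y) ≠ ⊤ := elen_ne_top_of_isFiniteLength hB
  have hCk : elen R (W →ₗ[R] Y) = elen R ↥(LinearMap.ker φ) := by
    rw [← hrange]
    exact elen_congr (LinearEquiv.ofInjective ι hι_inj)
  have h1 : elen R ((U →ₗ[R] Y) × (V →ₗ[R] Y))
      = elen R ↥(LinearMap.ker φ) + elen R ↥(LinearMap.range φ) := by
    rw [elen_add (LinearMap.ker φ)]
    congr 1
    exact elen_congr φ.quotKerEquivRange
  have key : elen R (U →ₗ[R] Y) + elen R (V →ₗ[R] Y)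
      = elen R (W →ₗ[R] Y) + elen R ↥(LinearMap.range φ) := by
    rw [hCk, ← h1, elen_prod]
  have hrle : elen R ↥(LinearMap.range φ) ≤ elen R (U →ₗ[R] Y) :=
    elen_le_of_injective (LinearMap.range φ).subtype (Submodule.injective_subtype _)
  have hle : elen R (V →ₗ[R] Y) ≤ elen R (W →ₗ[R] Y) := by
    have h2 : elen R (U →ₗ[R] Y) + elen R (V →ₗ[R] Y)
        ≤ elen R (U →ₗ[R] Y) + elen R (W →ₗ[R] Y) := by
      rw [key, add_comm (elen R (U →ₗ[R] Y)) (elen R (W →ₗ[R] Y))]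
      exact add_le_add_right hrle _
    exact (WithTop.add_le_add_iff_left haU).mp h2
  constructor
  · show Order.krullDim _ ≤ Order.krullDim _
    rw [← Order.height_top_eq_krullDim, ← Order.height_top_eq_krullDim]
    exact WithBot.coe_le_coe.mpr hle
  · show Order.krullDim _ = Order.krullDim _ ↔ _
    rw [← Order.height_top_eq_krullDim, ← Order.height_top_eq_krullDim, WithBot.coe_inj]
    have hcoe : (fun pq : (U →ₗ[R] Y) × (V →ₗ[R] Y) => pq.1.comp α + pq.2.comp β) = ⇑φ :=
      (funext hφ).symm
    rw [hcoe, ← LinearMap.range_eq_top]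
    constructor
    · intro hEq0
      have hEq : elen R (V →ₗ[R] Y) = elen R (W →ₗ[R] Y) := hEq0
      rw [← hEq] at key
      rw [add_comm (elen R (U →ₗ[R] Y)) (elen R (V →ₗ[R] Y))] at key
      have hAr : elen R (U →ₗ[R] Y) = elen R ↥(LinearMap.range φ) :=
        WithTop.add_left_cancel haB key
      exact elen_eq_top_submodule _ (by rw [← hAr]; exact haU) hAr.symm
    · intro hEq
      show elen R (V →ₗ[R] Y) = elen R (W →ₗ[R] Y)
      have h3 : elen R ↥(LinearMap.range φ) = elen R (U →ₗ[R] Y) := by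
        rw [hEq]; exact elen_congr Submodule.topEquiv
      rw [h3, add_comm (elen R (W →ₗ[R] Y)) (elen R (U →ₗ[R] Y))] at key
      exact WithTop.add_left_cancel haU key
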